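/- Let U_A ∈ ℝ^{m×p} and U_B ∈ ℝ^{m×q} have orthonormal columns, and let U_C ∈ ℝ^{m×ω} have orthonormal columns spanning a subspace containing both range(U_A) and range(U_B). Then for any matrix S ∈ ℝ^{r×m}, ‖U_A^T S^T S U_B − U_A^T U_B‖₂ ≤ ‖U_C^T S^T S U_C − I_ω‖₂. -/

import Mathlib

open Matrix

noncomputable def svals {p q : ℕ} (X : Matrix (Fin p) (Fin q) ℝ) : Fin q → ℝ :=
  fun i => Real.sqrt ((Matrix.isHermitian_conjTranspose_mul_self X).eigenvalues
    (Tuple.sort ((Matrix.isHermitian_conjTranspose_mul_self X).eigenvalues) i.rev))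

noncomputable def sNorm {p q : ℕ} (X : Matrix (Fin p) (Fin q) ℝ) : ℝ :=
  ⨆ i, svals X i

/-!
Both ranges lie in that of `U_C`, so `U_A = U_C P` and `U_B = U_C Q`, where `P`, `Q` again have
orthonormal columns. Then `U_Aᵀ SᵀS U_B - U_Aᵀ U_B = Pᵀ (U_Cᵀ SᵀS U_C - I) Q`, and `P`, `Q` have
operator norm at most one. It remains to identify `sNorm` with the `ℓ²` operator norm: by the
spectral theorem `‖XᴴX‖` is the largest eigenvalue of `XᴴX`, and `‖XᴴX‖ = ‖X‖²`.
-/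

open scoped Matrix.Norms.L2Operator

namespace Matrix

lemma exists_eq_mul_of_range_le {R : Type*} [CommSemiring R] {m n k : Type*} [Fintype n]
    [Fintype k] [DecidableEq n] {A : Matrix m n R} {U : Matrix m k R}
    (h : LinearMap.range A.mulVecLin ≤ LinearMap.range U.mulVecLin) :
    ∃ P : Matrix k n R, A = U * P := by
  have hcol : ∀ j, ∃ y, U *ᵥ y = A.col j := fun j => by
    simpa [mulVec_single_one] using h (LinearMap.mem_range_self A.mulVecLin (Pi.single j 1))
  choose y hy using hcol
  refine ⟨of fun l j => y j l, ?_⟩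
  ext i j
  rw [mul_apply, ← col_apply A j i, ← hy j]
  rfl

lemma transpose_mul_sub_transpose_mul_of_isometry {R : Type*} [CommRing R] {m n k l : Type*}
    [Fintype m] [Fintype n] [DecidableEq n] [Fintype k] {U : Matrix m n R}
    (hU : Uᵀ * U = 1) (M : Matrix m m R) (P : Matrix n k R) (Q : Matrix n l R) :
    (U * P)ᵀ * M * (U * Q) - (U * P)ᵀ * (U * Q) = Pᵀ * (Uᵀ * M * U - 1) * Q := by
  simp only [transpose_mul, Matrix.mul_sub, Matrix.sub_mul, Matrix.mul_one, Matrix.mul_assoc]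
  rw [← Matrix.mul_assoc Uᵀ U Q, hU, Matrix.one_mul]

variable {𝕜 : Type*} [RCLike 𝕜] {m n : Type*} [Fintype m] [Fintype n] [DecidableEq n]

lemma IsHermitian.l2_opNorm_eq_norm_eigenvalues {A : Matrix n n 𝕜} (hA : A.IsHermitian) :
    ‖A‖ = ‖hA.eigenvalues‖ := by
  conv_lhs => rw [hA.spectral_theorem, Unitary.conjStarAlgAut_apply, ← Unitary.coe_star]
  rw [CStarRing.norm_mul_coe_unitary, CStarRing.norm_coe_unitary_mul, l2_opNorm_diagonal]
  exact ((algebraMap_isometry ℝ 𝕜).postcomp_pi).norm_map_of_map_zero (by ext; simp) _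

lemma l2_opNorm_le_one_of_conjTranspose_mul_self_eq_one {U : Matrix m n 𝕜} (hU : Uᴴ * U = 1) :
    ‖U‖ ≤ 1 := by
  have h1 : ‖(1 : Matrix n n 𝕜)‖ ≤ 1 := by
    rw [← diagonal_one, l2_opNorm_diagonal]
    exact (pi_norm_le_iff_of_nonneg zero_le_one).2 fun _ => by simp
  have : ‖U‖ * ‖U‖ ≤ 1 := by rwa [← l2_opNorm_conjTranspose_mul_self, hU]
  nlinarith [norm_nonneg U]

end Matrix

lemma sNorm_eq_iSup_sqrt_eigenvalues {p q : ℕ} (X : Matrix (Fin p) (Fin q) ℝ) :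
    sNorm X = ⨆ j, √((isHermitian_conjTranspose_mul_self X).eigenvalues j) :=
  (Fin.revPerm.trans (Tuple.sort _)).iSup_comp
    (g := fun j => √((isHermitian_conjTranspose_mul_self X).eigenvalues j))

lemma sNorm_eq_l2_opNorm {p q : ℕ} (X : Matrix (Fin p) (Fin q) ℝ) : sNorm X = ‖X‖ := by
  set hH := isHermitian_conjTranspose_mul_self X
  have hsq : ‖X‖ ^ 2 = ‖hH.eigenvalues‖ := by
    rw [sq, ← l2_opNorm_conjTranspose_mul_self, hH.l2_opNorm_eq_norm_eigenvalues]
  have hnonneg : ∀ j, 0 ≤ hH.eigenvalues j :=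
    (posSemidef_conjTranspose_mul_self X).eigenvalues_nonneg
  rw [sNorm_eq_iSup_sqrt_eigenvalues]
  refine le_antisymm (Real.iSup_le (fun j => ?_) (norm_nonneg _)) ?_
  · rw [← Real.sqrt_sq (norm_nonneg X), hsq]
    exact Real.sqrt_le_sqrt ((le_abs_self _).trans (norm_le_pi_norm hH.eigenvalues j))
  · have hS : 0 ≤ ⨆ j, √(hH.eigenvalues j) := Real.iSup_nonneg fun _ => Real.sqrt_nonneg _
    rw [← pow_le_pow_iff_left₀ (norm_nonneg X) hS two_ne_zero, hsq]
    refine (pi_norm_le_iff_of_nonneg (sq_nonneg _)).2 fun j => ?_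
    rw [Real.norm_of_nonneg (hnonneg j), ← Real.sq_sqrt (hnonneg j)]
    exact pow_le_pow_left₀ (Real.sqrt_nonneg _)
      (le_ciSup (f := fun j => √(hH.eigenvalues j)) (Set.finite_range _).bddAbove j) 2

theorem stmt7 {m p q ω r : ℕ}
    (UA : Matrix (Fin m) (Fin p) ℝ) (UB : Matrix (Fin m) (Fin q) ℝ)
    (UC : Matrix (Fin m) (Fin ω) ℝ) (S : Matrix (Fin r) (Fin m) ℝ)
    (hUA : UAᵀ * UA = 1) (hUB : UBᵀ * UB = 1) (hUC : UCᵀ * UC = 1)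
    (hAC : LinearMap.range UA.mulVecLin ≤ LinearMap.range UC.mulVecLin)
    (hBC : LinearMap.range UB.mulVecLin ≤ LinearMap.range UC.mulVecLin) :
    sNorm (UAᵀ * Sᵀ * S * UB - UAᵀ * UB) ≤ sNorm (UCᵀ * Sᵀ * S * UC - 1) := by
  obtain ⟨P, rfl⟩ := exists_eq_mul_of_range_le hAC
  obtain ⟨Q, rfl⟩ := exists_eq_mul_of_range_le hBC
  rw [transpose_mul, Matrix.mul_assoc, ← Matrix.mul_assoc UCᵀ, hUC, Matrix.one_mul,
    ← conjTranspose_eq_transpose_of_trivial] at hUA hUB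
  have hP : ‖Pᵀ‖ ≤ 1 := by
    rw [← conjTranspose_eq_transpose_of_trivial, l2_opNorm_conjTranspose]
    exact l2_opNorm_le_one_of_conjTranspose_mul_self_eq_one hUA
  have hQ : ‖Q‖ ≤ 1 := l2_opNorm_le_one_of_conjTranspose_mul_self_eq_one hUB
  rw [sNorm_eq_l2_opNorm, sNorm_eq_l2_opNorm, Matrix.mul_assoc _ Sᵀ S, Matrix.mul_assoc UCᵀ Sᵀ S,
    transpose_mul_sub_transpose_mul_of_isometry hUC]
  set N := UCᵀ * (Sᵀ * S) * UC - 1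
  calc ‖Pᵀ * N * Q‖ ≤ ‖Pᵀ * N‖ * ‖Q‖ := l2_opNorm_mul _ _
    _ ≤ ‖Pᵀ‖ * ‖N‖ * ‖Q‖ := by gcongr; exact l2_opNorm_mul _ _
    _ ≤ 1 * ‖N‖ * 1 := by gcongr
    _ = ‖N‖ := by ring
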